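/- arXiv:1502.04971 — 6 statements merged into one kernel-verified Lean document; each statement's English description precedes it below -/
import Mathlib

section
/- Let N > 1, let χ be an odd real Dirichlet character modulo N, and let B > 1 be an integer with gcd(B, N) = 1 and χ(B) = −1. Let e be the multiplicative order of B modulo N (necessarily e is even). Let x₁ be an integer with 1 ≤ x₁ ≤ N, gcd(x₁, N) = 1 and χ(x₁) = 1, and set x_i := ⟨B^{i−1}·x₁⟩ for 1 ≤ i ≤ e + 1 (so x_{e+1} = x₁) and a_i := (B·x_i − x_{i+1})/N for 1 ≤ i ≤ e. Then (B + 1)·(−(1/N)·Σ_{i=1}^{e} χ(x_i)·x_i) = Σ_{i=1}^{e} (−1)^{i}·a_i. -/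
/-!
Write `g i = ⟨B^i x₁⟩`, so that `x_i = g (i - 1)`. By multiplicativity and periodicity
`χ(g i) = χ(B)^i χ(x₁) = (-1)^i`, so the left-hand side is `-(B + 1)/N · T` with
`T = ∑_{i<e} (-1)^i g i`. The right-hand side splits as `(-B T + U)/N` with
`U = ∑_{i<e} (-1)^i g (i+1)`, and shifting the index gives `U = -T` because the cycle closes up:
`g e = g 0`, and `(-1)^e = χ(g e) = χ(g 0) = 1`.
-/

theorem Int.ModEq.eq_of_abs_sub_lt {m a b : ℤ} (h : a ≡ b [ZMOD m]) (h2 : |b - a| < m) :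
    a = b :=
  (sub_eq_zero.mp (Int.eq_zero_of_abs_lt_dvd h.dvd h2)).symm

theorem map_one_of_map_mul_of_isUnit {M R : Type*} [MulOneClass M] [Monoid R] {χ : M → R}
    (hmul : ∀ a b, χ (a * b) = χ a * χ b) {a : M} (ha : IsUnit (χ a)) : χ 1 = 1 :=
  ha.mul_eq_left.mp (by rw [← hmul, mul_one])

theorem map_pow_of_map_mul_of_isUnit {M R : Type*} [Monoid M] [Monoid R] {χ : M → R}
    (hmul : ∀ a b, χ (a * b) = χ a * χ b) {a : M} (ha : IsUnit (χ a)) (n : ℕ) :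
    χ (a ^ n) = χ a ^ n :=
  map_pow (MonoidHom.mk ⟨χ, map_one_of_map_mul_of_isUnit hmul ha⟩ hmul : M →* R) a n

theorem Finset.sum_Icc_one_eq_sum_range {R : Type*} [AddCommMonoid R] (f : ℕ → R) (n : ℕ) :
    ∑ i ∈ Icc 1 n, f i = ∑ i ∈ range n, f (i + 1) := by
  rw [← Ico_add_one_right_eq_Icc, range_eq_Ico, sum_Ico_add']

theorem sum_range_neg_one_pow_mul_succ {R : Type*} [CommRing R] (g : ℕ → R) {e : ℕ}
    (hcycle : (-1) ^ e * g e = g 0) :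
    ∑ i ∈ Finset.range e, (-1) ^ i * g (i + 1) = -∑ i ∈ Finset.range e, (-1) ^ i * g i := by
  have hshift := Finset.sum_range_succ' (fun i => (-1 : R) ^ i * g i) e
  rw [Finset.sum_range_succ, hcycle] at hshift
  simp only [pow_succ, pow_zero, one_mul, mul_neg_one, neg_mul, Finset.sum_neg_distrib] at hshift
  linear_combination hshift

theorem alternating_cycle_sum {K : Type*} [Field K] (N B : K) (hN : N ≠ 0) (g : ℕ → K) {e : ℕ}
    (hcycle : (-1) ^ e * g e = g 0) :
    (B + 1) * (-(1 / N) * ∑ i ∈ Finset.range e, (-1) ^ i * g i) =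
      ∑ i ∈ Finset.range e, (-1) ^ (i + 1) * ((B * g i - g (i + 1)) / N) := by
  have hU := sum_range_neg_one_pow_mul_succ g hcycle
  have hsplit : ∑ i ∈ Finset.range e, (-1) ^ (i + 1) * ((B * g i - g (i + 1)) / N) =
      (-B * ∑ i ∈ Finset.range e, (-1) ^ i * g i +
        ∑ i ∈ Finset.range e, (-1) ^ i * g (i + 1)) / N := by
    rw [Finset.mul_sum, ← Finset.sum_add_distrib, Finset.sum_div]
    exact Finset.sum_congr rfl fun i _ => by ring
  rw [hsplit, hU]
  field_simp
  ring

/-- `r z` plays the role of `⟨z⟩`, so `x_i = r (B^(i-1)·x₁)` and `a_i = (B·x_i − x_{i+1})/N`. -/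
theorem cycle_formula_chiB_neg_one_general (N : ℤ) (χ : ℤ → ℤ)
    (hmul : ∀ a b, χ (a * b) = χ a * χ b)
    (hper : ∀ a b, a ≡ b [ZMOD N] → χ a = χ b)
    (B : ℤ) (hχB : χ B = -1)
    (e : ℕ) (heB : B ^ e ≡ 1 [ZMOD N])
    (x₁ : ℤ)
    (hχx₁ : χ x₁ = 1)
    (r : ℤ → ℤ) (hr : ∀ z, 1 ≤ r z ∧ r z ≤ N ∧ r z ≡ z [ZMOD N]) :
    ((B : ℚ) + 1) *
        (-(1 / (N : ℚ)) *
          ∑ i ∈ Finset.Icc 1 e,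
            (χ (r (B ^ (i - 1) * x₁)) : ℚ) * (r (B ^ (i - 1) * x₁) : ℚ)) =
      ∑ i ∈ Finset.Icc 1 e,
        (-1 : ℚ) ^ i *
          (((B * r (B ^ (i - 1) * x₁) - r (B ^ i * x₁) : ℤ) : ℚ) / (N : ℚ)) := by
  have hN : 0 < N := by linarith [hr 0]
  have hχorbit (i : ℕ) : χ (r (B ^ i * x₁)) = (-1) ^ i := by
    rw [hper _ _ (hr _).2.2, hmul, map_pow_of_map_mul_of_isUnit hmul (hχB ▸ isUnit_neg_one),
      hχB, hχx₁, mul_one]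
  have hcycle : r (B ^ e * x₁) = r (B ^ 0 * x₁) := by
    obtain ⟨h₁, h₂, -⟩ := hr (B ^ e * x₁)
    obtain ⟨h₃, h₄, -⟩ := hr (B ^ 0 * x₁)
    refine Int.ModEq.eq_of_abs_sub_lt (m := N) ?_ (abs_sub_lt_iff.mpr ⟨by linarith, by linarith⟩)
    calc r (B ^ e * x₁) ≡ B ^ e * x₁ [ZMOD N] := (hr _).2.2
      _ ≡ 1 * x₁ [ZMOD N] := heB.mul_right x₁
      _ ≡ r (B ^ 0 * x₁) [ZMOD N] := by rw [pow_zero]; exact ((hr _).2.2).symm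
  have hsign : (-1 : ℚ) ^ e = 1 := by
    exact_mod_cast (by rw [← hχorbit, hcycle, hχorbit, pow_zero] : (-1 : ℤ) ^ e = 1)
  simp only [Finset.sum_Icc_one_eq_sum_range, Nat.add_sub_cancel, hχorbit]
  push_cast
  exact alternating_cycle_sum _ _ (by exact_mod_cast hN.ne') (fun i => (r (B ^ i * x₁) : ℚ))
    (by simp only [hcycle, hsign, one_mul])

/-- the cycle contribution formula when χ(B) = −1.  Here `χ` is an
odd real Dirichlet character modulo `N`, `e` is the multiplicative order of `B`
modulo `N`, `r z` plays the role of `⟨z⟩` (the unique `y` with `1 ≤ y ≤ N` and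
`z ≡ y (mod N)`), `x_i = r (B^(i-1)·x₁)` and `a_i = (B·x_i − x_{i+1})/N`. -/
theorem cycle_formula_chiB_neg_one (N : ℤ) (hN : 1 < N) (χ : ℤ → ℤ)
    (hval : ∀ a, χ a = 0 ∨ χ a = 1 ∨ χ a = -1)
    (hmul : ∀ a b, χ (a * b) = χ a * χ b)
    (hper : ∀ a b, a ≡ b [ZMOD N] → χ a = χ b)
    (hzero : ∀ a, χ a = 0 ↔ Int.gcd a N ≠ 1)
    (hodd : χ (-1) = -1)
    (B : ℤ) (hB : 1 < B) (hBN : Int.gcd B N = 1) (hχB : χ B = -1)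
    (e : ℕ) (he : 0 < e) (heB : B ^ e ≡ 1 [ZMOD N])
    (hemin : ∀ j : ℕ, 0 < j → j < e → ¬ B ^ j ≡ 1 [ZMOD N])
    (x₁ : ℤ) (hx₁1 : 1 ≤ x₁) (hx₁N : x₁ ≤ N) (hx₁ : Int.gcd x₁ N = 1)
    (hχx₁ : χ x₁ = 1)
    (r : ℤ → ℤ) (hr : ∀ z, 1 ≤ r z ∧ r z ≤ N ∧ r z ≡ z [ZMOD N]) :
    ((B : ℚ) + 1) *
        (-(1 / (N : ℚ)) *
          ∑ i ∈ Finset.Icc 1 e,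
            (χ (r (B ^ (i - 1) * x₁)) : ℚ) * (r (B ^ (i - 1) * x₁) : ℚ)) =
      ∑ i ∈ Finset.Icc 1 e,
        (-1 : ℚ) ^ i *
          (((B * r (B ^ (i - 1) * x₁) - r (B ^ i * x₁) : ℤ) : ℚ) / (N : ℚ)) :=
  cycle_formula_chiB_neg_one_general N χ hmul hper B hχB e heB x₁ hχx₁ r hr
end

section
/- Let N > 1, let χ be an odd real Dirichlet character modulo N, and let B > 1 be an integer with gcd(B, N) = 1. Then −Σ_{x=1}^{N} χ(x)·⌊Bx/N⌋ = (B − χ(B))·h. -/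
/-! Since `N ⌊Bx/N⌋ = Bx - (Bx mod N)`, the claim reduces to
`Σ χ(x) (Bx mod N) = χ(B) Σ χ(x) x`. As `B` is invertible mod `N`, `x ↦ Bx mod N` permutes the
residues, and `χ(x) = χ(B) χ(Bx mod N)` because `χ(B)² = 1`; reindexing the sum gives the identity. -/

open Finset Function

theorem emod_mul_emod_eq_of_mul_modEq_one {N u B x : ℤ} (hu : u * B ≡ 1 [ZMOD N])
    (hx₀ : 0 ≤ x) (hxN : x < N) : u * (B * x % N) % N = x := by
  have h : u * (B * x % N) ≡ x [ZMOD N] :=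
    calc u * (B * x % N) ≡ u * (B * x) [ZMOD N] := (Int.mod_modEq _ _).mul_left _
      _ = u * B * x := by ring
      _ ≡ 1 * x [ZMOD N] := hu.mul_right _
      _ = x := one_mul x
  rwa [Int.ModEq, Int.emod_eq_of_lt hx₀ hxN] at h

namespace Function.Periodic

variable {M : Type*} [AddCommMonoid M] {g : ℤ → M} {N : ℤ}

theorem sum_Icc_one_eq_sum_Ico_zero (hg : Periodic g N) (hN : 0 < N) :
    ∑ x ∈ Icc 1 N, g x = ∑ x ∈ Ico 0 N, g x := by
  have hgN : g N = g 0 := by simpa using hg 0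
  rw [← zero_add 1, Icc_add_one_left_eq_Ioc, Ioc_eq_cons_Ioo hN, Ico_eq_cons_Ioo hN, sum_cons,
    sum_cons, hgN]

theorem sum_Ico_zero_comp_mul (hg : Periodic g N) (hN : 0 < N) {B : ℤ} (hBN : IsCoprime B N) :
    ∑ x ∈ Ico 0 N, g (B * x) = ∑ x ∈ Ico 0 N, g x := by
  obtain ⟨u, v, huv⟩ := hBN
  have hu : u * B ≡ 1 [ZMOD N] :=
    (Int.modEq_iff_add_fac.2 ⟨-v, by linear_combination huv⟩).symm
  have hu' : B * u ≡ 1 [ZMOD N] := by rwa [mul_comm]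
  have hmem : ∀ y, y % N ∈ Ico 0 N := fun y =>
    mem_Ico.2 ⟨Int.emod_nonneg _ hN.ne', Int.emod_lt_of_pos _ hN⟩
  refine sum_nbij' (fun x => B * x % N) (fun y => u * y % N) (fun x _ => hmem _)
    (fun y _ => hmem _) (fun x hx => ?_) (fun y hy => ?_) (fun x _ => ?_)
  · exact emod_mul_emod_eq_of_mul_modEq_one hu (mem_Ico.1 hx).1 (mem_Ico.1 hx).2
  · exact emod_mul_emod_eq_of_mul_modEq_one hu' (mem_Ico.1 hy).1 (mem_Ico.1 hy).2
  · rw [Int.emod_def, mul_comm N]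
    exact (hg.sub_int_mul_eq (B * x / N)).symm

theorem sum_Icc_one_comp_mul (hg : Periodic g N) (hN : 0 < N) {B : ℤ} (hBN : IsCoprime B N) :
    ∑ x ∈ Icc 1 N, g (B * x) = ∑ x ∈ Icc 1 N, g x := by
  have hgB : Periodic (fun x => g (B * x)) N := fun x => by
    simpa [mul_add] using hg.int_mul B (B * x)
  rw [hgB.sum_Icc_one_eq_sum_Ico_zero hN, hg.sum_Icc_one_eq_sum_Ico_zero hN,
    hg.sum_Ico_zero_comp_mul hN hBN]

end Function.Periodic

section MultiplicativePeriodic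

variable {N B : ℤ} {χ : ℤ → ℤ}

theorem sum_mul_mul_emod_eq (hN : 0 < N) (hmul : ∀ a b, χ (a * b) = χ a * χ b)
    (hχ : Periodic χ N) (hχN : χ N = 0) (hχB : χ B * χ B = 1) (hBN : IsCoprime B N) :
    ∑ x ∈ Icc 1 N, χ x * (B * x % N) = χ B * ∑ x ∈ Icc 1 N, χ x * x := by
  let g : ℤ → ℤ := fun y => χ y * (y % N)
  have hg : Periodic g N := fun y => by simp only [g, hχ y, Int.add_emod_right]
  have htwist : ∀ x, χ B * (χ x * (B * x % N)) = g (B * x) := fun x => by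
    simp only [g, hmul]; ring
  have huntwist : ∀ x ∈ Icc 1 N, g x = χ x * x := fun x hx => by
    obtain ⟨hx₁, hxN⟩ := mem_Icc.1 hx
    rcases hxN.lt_or_eq with hxN | rfl
    · simp only [g, Int.emod_eq_of_lt (by omega) hxN]
    · simp [g, hχN]
  calc ∑ x ∈ Icc 1 N, χ x * (B * x % N)
      = χ B * (χ B * ∑ x ∈ Icc 1 N, χ x * (B * x % N)) := by rw [← mul_assoc, hχB, one_mul]
    _ = χ B * ∑ x ∈ Icc 1 N, g (B * x) := by simp only [mul_sum, htwist]
    _ = χ B * ∑ x ∈ Icc 1 N, χ x * x := by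
      rw [hg.sum_Icc_one_comp_mul hN hBN, sum_congr rfl huntwist]

theorem mul_sum_mul_ediv_eq (hN : 0 < N) (hmul : ∀ a b, χ (a * b) = χ a * χ b)
    (hχ : Periodic χ N) (hχN : χ N = 0) (hχB : χ B * χ B = 1) (hBN : IsCoprime B N) :
    N * ∑ x ∈ Icc 1 N, χ x * (B * x / N) = (B - χ B) * ∑ x ∈ Icc 1 N, χ x * x := by
  have hterm : ∀ x, N * (χ x * (B * x / N)) = B * (χ x * x) - χ x * (B * x % N) := fun x => by
    linear_combination χ x * Int.mul_ediv_add_emod (B * x) N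
  rw [mul_sum, sum_congr rfl fun x _ => hterm x, sum_sub_distrib, ← mul_sum,
    sum_mul_mul_emod_eq hN hmul hχ hχN hχB hBN]
  ring

end MultiplicativePeriodic

theorem floor_class_number_formula_general (N : ℤ) (hN : 1 < N) (χ : ℤ → ℤ)
    (hval : ∀ a, χ a = 0 ∨ χ a = 1 ∨ χ a = -1)
    (hmul : ∀ a b, χ (a * b) = χ a * χ b)
    (hper : ∀ a b, a ≡ b [ZMOD N] → χ a = χ b)
    (hzero : ∀ a, χ a = 0 ↔ Int.gcd a N ≠ 1)
    (B : ℤ) (hBN : Int.gcd B N = 1) :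
    -(∑ x ∈ Finset.Icc (1 : ℤ) N, (χ x : ℚ) * (⌊((B : ℚ) * (x : ℚ)) / (N : ℚ)⌋ : ℚ)) =
      ((B : ℚ) - (χ B : ℚ)) *
        (-(1 / (N : ℚ)) * ∑ x ∈ Finset.Icc (1 : ℤ) N, (χ x : ℚ) * (x : ℚ)) := by
  have hN₀ : 0 < N := by omega
  have hχ : Periodic χ N := fun a => hper _ _ Int.add_modEq_right
  have hχN : χ N = 0 := (hzero N).2 (by rw [Int.gcd_self]; omega)
  have hχB : χ B * χ B = 1 := by
    rcases hval B with h | h | h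
    · exact absurd ((hzero B).1 h) (not_not.2 hBN)
    all_goals simp [h]
  have hfloor : ∀ x : ℤ, ⌊(B : ℚ) * x / N⌋ = B * x / N := fun x => by
    rw [Int.floor_div_cast_of_nonneg hN₀.le, ← Int.cast_mul, Int.floor_intCast]
  have key := congrArg (Int.cast : ℤ → ℚ)
    (mul_sum_mul_ediv_eq hN₀ hmul hχ hχN hχB (Int.isCoprime_iff_gcd_eq_one.2 hBN))
  push_cast at key
  simp only [hfloor]
  field_simp
  linear_combination -key

/-- the class number formula in terms of floors,
`−Σ_{x=1}^{N} χ(x)·⌊Bx/N⌋ = (B − χ(B))·h`, where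
`h = −(1/N)·Σ_{x=1}^{N} χ(x)·x`. -/
theorem floor_class_number_formula (N : ℤ) (hN : 1 < N) (χ : ℤ → ℤ)
    (hval : ∀ a, χ a = 0 ∨ χ a = 1 ∨ χ a = -1)
    (hmul : ∀ a b, χ (a * b) = χ a * χ b)
    (hper : ∀ a b, a ≡ b [ZMOD N] → χ a = χ b)
    (hzero : ∀ a, χ a = 0 ↔ Int.gcd a N ≠ 1)
    (hodd : χ (-1) = -1)
    (B : ℤ) (hB : 1 < B) (hBN : Int.gcd B N = 1) :
    -(∑ x ∈ Finset.Icc (1 : ℤ) N, (χ x : ℚ) * (⌊((B : ℚ) * (x : ℚ)) / (N : ℚ)⌋ : ℚ)) =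
      ((B : ℚ) - (χ B : ℚ)) *
        (-(1 / (N : ℚ)) * ∑ x ∈ Finset.Icc (1 : ℤ) N, (χ x : ℚ) * (x : ℚ)) :=
  floor_class_number_formula_general N hN χ hval hmul hper hzero B hBN
end

section
/- Let p > 3 be a prime with p ≡ 3 (mod 4), let B > 1 be a primitive root modulo p, and for 1 ≤ i ≤ p − 1 let a_i := (B·⟨B^{i−1}⟩ − ⟨B^{i}⟩)/p be the i-th digit of the base-B expansion of 1/p. Then (B + 1)·h = Σ_{i=1}^{p−1} (−1)^{i}·a_i, where h := −(1/p)·Σ_{x=1}^{p−1} (x/p)·x and (x/p) is the Legendre symbol. (By Dirichlet's class number formula, h is the class number of ℚ(√−p).) -/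
/-!
Since `B` generates `(ZMod p)ˣ`, the residues `⟨B^j⟩`, `0 ≤ j < p - 1`, run through `1, …, p - 1`,
and since a primitive root is a quadratic non-residue, `(⟨B^j⟩/p) = (-1)^j`. Hence
`Σ (x/p)·x = Σ_j (-1)^j ⟨B^j⟩`. On the other side, `p·a_i = B⟨B^{i-1}⟩ - ⟨B^i⟩`, and as
`⟨B^{p-1}⟩ = ⟨B^0⟩` and `p - 1` is even, the alternating sum of the digits telescopes to
`-(B + 1)/p` times the same sum.
-/

open Finset

section Telescoping

variable {R : Type*} [CommRing R]

theorem sum_range_neg_one_pow_succ_mul_of_eq (F : ℕ → R) {n : ℕ} (hn : Even n)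
    (hF : F n = F 0) :
    ∑ j ∈ range n, (-1) ^ (j + 1) * F (j + 1) = ∑ j ∈ range n, (-1) ^ j * F j := by
  have h := (sum_range_succ' (fun j => (-1 : R) ^ j * F j) n).symm.trans
    (sum_range_succ (fun j => (-1 : R) ^ j * F j) n)
  rwa [hn.neg_one_pow, hF, pow_zero, add_left_inj] at h

theorem sum_Icc_neg_one_pow_mul_digit (B : R) (F : ℕ → R) {n : ℕ} (hn : Even n)
    (hF : F n = F 0) :
    ∑ i ∈ Icc 1 n, (-1) ^ i * (B * F (i - 1) - F i) =
      -(B + 1) * ∑ j ∈ range n, (-1) ^ j * F j := by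
  have hshift (j : ℕ) : (-1) ^ (j + 1) * (B * F j) = -B * ((-1) ^ j * F j) := by ring
  rw [← Ico_add_one_right_eq_Icc, sum_Ico_eq_sum_range, Nat.add_sub_cancel]
  simp only [add_comm 1, Nat.add_sub_cancel, mul_sub, sum_sub_distrib, hshift, ← mul_sum,
    sum_range_neg_one_pow_succ_mul_of_eq F hn hF]
  ring

end Telescoping

/-- `r z` is the representative `⟨z⟩` of `z` modulo `p` in `[1, p]`. -/
def IsLeastPositiveResidue (p : ℕ) (r : ℤ → ℤ) : Prop :=
  ∀ z, 1 ≤ r z ∧ r z ≤ p ∧ r z ≡ z [ZMOD p]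

section Residue

variable {p : ℕ} [Fact p.Prime] {r : ℤ → ℤ}

theorem IsLeastPositiveResidue.intCast_eq (hr : IsLeastPositiveResidue p r) (z : ℤ) :
    ((r z : ℤ) : ZMod p) = z :=
  (ZMod.intCast_eq_intCast_iff _ _ _).mpr (hr z).2.2

theorem IsLeastPositiveResidue.eq_of_intCast_eq (hr : IsLeastPositiveResidue p r) {z w : ℤ}
    (h : (z : ZMod p) = w) : r z = r w := by
  have hmod : r z - 1 ≡ r w - 1 [ZMOD p] := by
    rw [← ZMod.intCast_eq_intCast_iff]
    push_cast
    rw [hr.intCast_eq, hr.intCast_eq, h]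
  obtain ⟨hz₁, hz₂, -⟩ := hr z
  obtain ⟨hw₁, hw₂, -⟩ := hr w
  rw [Int.ModEq, Int.emod_eq_of_lt, Int.emod_eq_of_lt] at hmod <;> omega

theorem IsLeastPositiveResidue.mem_Icc (hr : IsLeastPositiveResidue p r) {z : ℤ}
    (hz : (z : ZMod p) ≠ 0) : r z ∈ Icc 1 ((p : ℤ) - 1) := by
  obtain ⟨h₁, h₂, -⟩ := hr z
  have hne : r z ≠ p := fun h => hz <| by
    rw [← hr.intCast_eq, h, Int.cast_natCast, ZMod.natCast_self]
  exact Finset.mem_Icc.mpr ⟨h₁, by omega⟩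

end Residue

section PrimitiveRoot

variable {p : ℕ} [Fact p.Prime] {B : ℤ}

theorem intCast_ne_zero_of_orderOf_eq (hB : orderOf (B : ZMod p) = p - 1) :
    (B : ZMod p) ≠ 0 := by
  rintro h
  rw [h, orderOf_zero] at hB
  have := (Fact.out : p.Prime).two_le
  omega

theorem legendreSym_eq_neg_one_of_orderOf_eq (hp : p ≠ 2)
    (hB : orderOf (B : ZMod p) = p - 1) : legendreSym p B = -1 := by
  refine (legendreSym.eq_neg_one_iff_not_one p (intCast_ne_zero_of_orderOf_eq hB)).mpr
    fun h => ?_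
  have hpow : (B : ZMod p) ^ (p / 2) = 1 := by rw [← legendreSym.eq_pow, h, Int.cast_one]
  have := (Fact.out : p.Prime).two_le
  have := Nat.le_of_dvd (by omega) (hB ▸ orderOf_dvd_of_pow_eq_one hpow)
  omega

variable {r : ℤ → ℤ}

theorem legendreSym_residue_pow (hr : IsLeastPositiveResidue p r) (hp : p ≠ 2)
    (hB : orderOf (B : ZMod p) = p - 1) (j : ℕ) :
    legendreSym p (r (B ^ j)) = (-1) ^ j := by
  rw [legendreSym, hr.intCast_eq, Int.cast_pow, map_pow, ← legendreSym,
    legendreSym_eq_neg_one_of_orderOf_eq hp hB]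

theorem injOn_residue_pow (hr : IsLeastPositiveResidue p r)
    (hB : orderOf (B : ZMod p) = p - 1) :
    Set.InjOn (fun j : ℕ => r (B ^ j)) (range (p - 1)) := by
  intro j hj k hk hjk
  simp only [coe_range, Set.mem_Iio] at hj hk
  refine pow_injOn_Iio_orderOf (hB ▸ hj) (hB ▸ hk) ?_
  simpa [hr.intCast_eq] using congrArg (fun z : ℤ => (z : ZMod p)) hjk

theorem image_residue_pow_range (hr : IsLeastPositiveResidue p r)
    (hB : orderOf (B : ZMod p) = p - 1) :
    (range (p - 1)).image (fun j => r (B ^ j)) = Icc 1 ((p : ℤ) - 1) := by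
  refine eq_of_subset_of_card_le (fun x hx => ?_) ?_
  · obtain ⟨j, -, rfl⟩ := mem_image.mp hx
    exact hr.mem_Icc (by push_cast; exact pow_ne_zero j (intCast_ne_zero_of_orderOf_eq hB))
  · rw [card_image_of_injOn (injOn_residue_pow hr hB), Int.card_Icc, card_range]
    omega

theorem sum_Icc_legendreSym_mul_self (hr : IsLeastPositiveResidue p r) (hp : p ≠ 2)
    (hB : orderOf (B : ZMod p) = p - 1) :
    ∑ x ∈ Icc 1 ((p : ℤ) - 1), legendreSym p x * x =
      ∑ j ∈ range (p - 1), (-1) ^ j * r (B ^ j) := by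
  rw [← image_residue_pow_range hr hB, sum_image (injOn_residue_pow hr hB)]
  simp only [legendreSym_residue_pow hr hp hB]

end PrimitiveRoot

theorem girstmair_general (p : ℕ) [Fact p.Prime] (hpmod : p % 4 = 3)
    (B : ℤ) (hprim : orderOf (B : ZMod p) = p - 1)
    (r : ℤ → ℤ) (hr : ∀ z, 1 ≤ r z ∧ r z ≤ (p : ℤ) ∧ r z ≡ z [ZMOD (p : ℤ)]) :
    ((B : ℚ) + 1) *
        (-(1 / (p : ℚ)) *
          ∑ x ∈ Finset.Icc (1 : ℤ) ((p : ℤ) - 1), (legendreSym p x : ℚ) * (x : ℚ)) =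
      ∑ i ∈ Finset.Icc 1 (p - 1),
        (-1 : ℚ) ^ i * (((B * r (B ^ (i - 1)) - r (B ^ i) : ℤ) : ℚ) / (p : ℚ)) := by
  have hp : p ≠ 2 := by omega
  have hperiod : r (B ^ (p - 1)) = r (B ^ 0) :=
    IsLeastPositiveResidue.eq_of_intCast_eq hr
      (by push_cast; rw [← hprim, pow_orderOf_eq_one, pow_zero])
  have hchar : ∑ x ∈ Icc 1 ((p : ℤ) - 1), (legendreSym p x : ℚ) * x =
      ∑ j ∈ range (p - 1), (-1) ^ j * (r (B ^ j) : ℚ) := by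
    exact_mod_cast sum_Icc_legendreSym_mul_self hr hp hprim
  have hdigits := sum_Icc_neg_one_pow_mul_digit (B : ℚ) (fun j => (r (B ^ j) : ℚ))
    ((Fact.out : p.Prime).even_sub_one hp) (by simp only [hperiod])
  push_cast
  simp only [mul_div_assoc', ← sum_div, hdigits, hchar]
  ring

/-- Girstmair's formula.  For a prime `p > 3` with `p ≡ 3 (mod 4)`
and `B > 1` a primitive root mod `p`, with digits `a_i = (B·⟨B^{i−1}⟩ − ⟨B^i⟩)/p`
of the base-`B` expansion of `1/p` (here `r z` plays the role of `⟨z⟩`, the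
unique `y` with `1 ≤ y ≤ p` and `z ≡ y (mod p)`),
`(B+1)·h = Σ_{i=1}^{p−1} (−1)^i a_i` where
`h = −(1/p)·Σ_{x=1}^{p−1} (x/p)·x`. -/
theorem girstmair (p : ℕ) [Fact p.Prime] (hp3 : 3 < p) (hpmod : p % 4 = 3)
    (B : ℤ) (hB : 1 < B) (hprim : orderOf (B : ZMod p) = p - 1)
    (r : ℤ → ℤ) (hr : ∀ z, 1 ≤ r z ∧ r z ≤ (p : ℤ) ∧ r z ≡ z [ZMOD (p : ℤ)]) :
    ((B : ℚ) + 1) *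
        (-(1 / (p : ℚ)) *
          ∑ x ∈ Finset.Icc (1 : ℤ) ((p : ℤ) - 1), (legendreSym p x : ℚ) * (x : ℚ)) =
      ∑ i ∈ Finset.Icc 1 (p - 1),
        (-1 : ℚ) ^ i * (((B * r (B ^ (i - 1)) - r (B ^ i) : ℤ) : ℚ) / (p : ℚ)) :=
  girstmair_general p hpmod B hprim r hr
end

section
/- Let N > 1, let χ be an odd real Dirichlet character modulo N, and let B ≥ 2 be an integer with gcd(B, N) = 1. Then Σ_{k=0}^{⌊B/2⌋−1} (B − 1 − 2k)·E_k(B) = (B − χ(B))·h. -/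
/-!
Oddness and periodicity give `χ(N - x) = -χ(x)`, hence `E_{B-1-k}(B) = -E_k(B)`, and pairing `k`
with `B - 1 - k` turns the left-hand side into `-Σ_{k<B} k E_k(B)`. A point `x ∈ [1, N]` prime to
`N` lies in exactly one block, the one with `k = ⌊Bx/N⌋`, so `Σ_k k E_k(B) = Σ_x χ(x) ⌊Bx/N⌋`, and
`N ⌊Bx/N⌋ = Bx - (Bx mod N)`. Finally `x ↦ Bx mod N` permutes the residues and
`χ(Bx mod N) = χ(B) χ(x)`, so `Σ_x χ(x) (Bx mod N) = χ(B) Σ_x χ(x) x`.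
-/

/-- `E_k(B) = Σ χ(x)`, the sum of `χ(x)` over all integers `x` with
`kN/B < x < (k+1)N/B` (for `0 ≤ k ≤ B−1` these integers all lie in `[1, N]`,
and the inequalities are rewritten as `kN < Bx` and `Bx < (k+1)N`). -/
noncomputable def Esum (N : ℤ) (χ : ℤ → ℤ) (B k : ℤ) : ℤ :=
  ∑ x ∈ (Finset.Icc (1 : ℤ) N).filter (fun x => k * N < B * x ∧ B * x < (k + 1) * N), χ x

/-- `h = −(1/N)·Σ_{x=1}^{N} χ(x)·x`, the class number expression. -/
noncomputable def hcl (N : ℤ) (χ : ℤ → ℤ) : ℚ :=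
  -(1 / (N : ℚ)) * ∑ x ∈ Finset.Icc (1 : ℤ) N, (χ x : ℚ) * (x : ℚ)

open Finset

namespace Int

theorem ediv_eq_iff_of_not_dvd {a n k : ℤ} (hn : 0 < n) (ha : ¬n ∣ a) :
    a / n = k ↔ k * n < a ∧ a < (k + 1) * n := by
  have hne : k * n ≠ a := fun h => ha ⟨k, by rw [← h, mul_comm]⟩
  rw [le_antisymm_iff, ← Int.lt_add_one_iff, Int.ediv_lt_iff_lt_mul hn,
    Int.le_ediv_iff_mul_le hn, and_comm]
  exact and_congr_left' ⟨fun h => lt_of_le_of_ne h hne, le_of_lt⟩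

theorem sum_Ico_const_sub {M : Type*} [AddCommMonoid M] (f : ℤ → M) (a b c : ℤ) :
    ∑ k ∈ Ico a b, f (c - k) = ∑ k ∈ Ico (c - b + 1) (c - a + 1), f k := by
  refine sum_nbij' (c - ·) (c - ·) ?_ ?_ (fun _ _ => by ring) (fun _ _ => by ring)
    (fun _ _ => rfl) <;>
  · intro k hk
    simp only [mem_Ico] at hk ⊢
    omega

theorem sum_Icc_one_eq_sum_Ico_zero {M : Type*} [AddCancelCommMonoid M] {N : ℤ} (hN : 0 ≤ N)
    {f : ℤ → M} (hf : f N = f 0) : ∑ x ∈ Icc 1 N, f x = ∑ x ∈ Ico 0 N, f x := by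
  have hIcc : Icc 1 N = Ioc 0 N := by ext; simp only [mem_Icc, mem_Ioc]; omega
  apply add_right_cancel (b := f 0)
  rw [hIcc, sum_Ioc_add_eq_sum_Icc hN, ← hf, sum_Ico_add_eq_sum_Icc hN]

theorem sum_Ico_comp_mul_emod {M : Type*} [AddCommMonoid M] {N B : ℤ} (hN : 0 < N)
    (hB : IsCoprime B N) (f : ℤ → M) :
    ∑ x ∈ Ico 0 N, f (B * x % N) = ∑ x ∈ Ico 0 N, f x := by
  obtain ⟨u, v, huv⟩ := hB
  have hinv : ∀ {a b : ℤ}, a * b ≡ 1 [ZMOD N] → ∀ x ∈ Ico 0 N, a * (b * x % N) % N = x := by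
    intro a b hab x hx
    rw [mem_Ico] at hx
    calc a * (b * x % N) % N = a * b * x % N := by
          rw [mul_assoc]; exact (Int.mod_modEq _ _).mul_left a
      _ = x := by rw [hab.mul_right x, one_mul, Int.emod_eq_of_lt hx.1 hx.2]
  have hmem : ∀ a x : ℤ, a * x % N ∈ Ico 0 N := fun a x =>
    mem_Ico.2 ⟨Int.emod_nonneg _ hN.ne', Int.emod_lt_of_pos _ hN⟩
  refine sum_nbij' (B * · % N) (u * · % N) (fun x _ => hmem B x) (fun y _ => hmem u y)
    (hinv (Int.modEq_iff_dvd.2 ⟨v, by linarith⟩))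
    (hinv (Int.modEq_iff_dvd.2 ⟨v, by linarith⟩)) (fun _ _ => rfl)

end Int

theorem sum_Icc_half_mul_eq_neg_sum_mul {B : ℤ} (hB : 0 ≤ B) {E : ℤ → ℤ}
    (hE : ∀ k, E (B - 1 - k) = -E k) :
    ∑ k ∈ Icc 0 (B / 2 - 1), (B - 1 - 2 * k) * E k = -∑ k ∈ Icc 0 (B - 1), k * E k := by
  set m := B / 2
  -- for odd `B` the middle index `m` is fixed by `k ↦ B - 1 - k`, so `E m = -E m = 0`
  have hmid : ∑ k ∈ Ico m (B - m), k * E k = 0 := sum_eq_zero fun k hk => by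
    have hk : B - 1 - k = k := by rw [mem_Ico] at hk; omega
    have hEk := hE k
    rw [hk] at hEk
    rw [show E k = 0 by omega, mul_zero]
  have hupper : ∑ k ∈ Ico (B - m) B, k * E k = -∑ k ∈ Ico 0 m, (B - 1 - k) * E k := by
    rw [show Ico (B - m) B = Ico (B - 1 - m + 1) (B - 1 - 0 + 1) by congr 1 <;> ring,
      ← Int.sum_Ico_const_sub, ← sum_neg_distrib]
    exact sum_congr rfl fun k _ => by rw [hE]; ring
  have hsplit : ∀ k, (B - 1 - 2 * k) * E k = (B - 1 - k) * E k - k * E k := fun k => by ring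
  rw [show Icc 0 (m - 1) = Ico 0 m by ext; simp only [mem_Icc, mem_Ico]; omega,
    show Icc 0 (B - 1) = Ico 0 B by ext; simp only [mem_Icc, mem_Ico]; omega,
    ← Ico_union_Ico_eq_Ico (by omega : 0 ≤ m) (by omega : m ≤ B),
    sum_union (Ico_disjoint_Ico_consecutive _ _ _),
    ← Ico_union_Ico_eq_Ico (by omega : m ≤ B - m) (by omega : B - m ≤ B),
    sum_union (Ico_disjoint_Ico_consecutive _ _ _), hmid, hupper]
  simp only [hsplit, sum_sub_distrib]
  ring

section Character

variable {N : ℤ} {χ : ℤ → ℤ}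

theorem apply_sub_eq_neg_of_odd (hmul : ∀ a b, χ (a * b) = χ a * χ b)
    (hper : ∀ a b, a ≡ b [ZMOD N] → χ a = χ b) (hodd : χ (-1) = -1) (x : ℤ) :
    χ (N - x) = -χ x := by
  rw [hper (N - x) (-1 * x) (Int.modEq_iff_dvd.2 ⟨-1, by ring⟩), hmul, hodd, neg_one_mul]

theorem Esum_sub_one_sub (hN : 0 < N) (hneg : ∀ x, χ (N - x) = -χ x) (B k : ℤ) :
    Esum N χ B (B - 1 - k) = -Esum N χ B k := by
  rw [Esum, Esum, ← sum_neg_distrib]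
  refine sum_nbij' (N - ·) (N - ·) ?_ ?_ (fun _ _ => by ring) (fun _ _ => by ring)
    (fun x _ => by rw [hneg, neg_neg])
  all_goals
    intro x hx
    simp only [mem_filter, mem_Icc] at hx ⊢
    obtain ⟨⟨hx1, hxN⟩, hlo, hhi⟩ := hx
    have hxlt : x < N := by
      refine lt_of_le_of_ne hxN fun hx => ?_
      subst hx
      have := lt_of_mul_lt_mul_right hlo hN.le
      have := lt_of_mul_lt_mul_right hhi hN.le
      omega
    refine ⟨⟨by omega, by omega⟩, by linarith, by linarith⟩

theorem sum_ite_mul_eq_mul_ediv (hN : 1 < N) (hzero : ∀ a, χ a = 0 ↔ Int.gcd a N ≠ 1)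
    {B : ℤ} (hB : 0 < B) (hBN : IsCoprime B N) {x : ℤ} (hx : x ∈ Icc 1 N) :
    ∑ k ∈ Icc 0 (B - 1), (if k * N < B * x ∧ B * x < (k + 1) * N then k * χ x else 0) =
      χ x * (B * x / N) := by
  rcases eq_or_ne (χ x) 0 with h0 | h0
  · simp [h0]
  rw [mem_Icc] at hx
  have hxN : IsCoprime x N := Int.isCoprime_iff_gcd_eq_one.2 (not_not.1 (mt (hzero x).2 h0))
  have hndvd : ¬N ∣ B * x := fun h => by
    have hunit := isCoprime_self.1 (hxN.of_isCoprime_of_dvd_left (hBN.symm.dvd_of_dvd_mul_left h))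
    rw [Int.isUnit_iff] at hunit
    omega
  have hxlt : x < N := lt_of_le_of_ne hx.2 fun h => hndvd (h ▸ dvd_mul_left N B)
  have hq : B * x / N ∈ Icc 0 (B - 1) := by
    rw [mem_Icc, Int.le_sub_one_iff, Int.ediv_lt_iff_lt_mul (by omega)]
    exact ⟨Int.ediv_nonneg (mul_nonneg hB.le (by omega)) (by omega), by nlinarith⟩
  rw [sum_congr rfl fun k _ => if_congr (Int.ediv_eq_iff_of_not_dvd (by omega) hndvd).symm rfl rfl,
    sum_ite_eq, if_pos hq, mul_comm]

theorem sum_mul_Esum_eq_sum_mul_ediv (hN : 1 < N) (hzero : ∀ a, χ a = 0 ↔ Int.gcd a N ≠ 1)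
    {B : ℤ} (hB : 0 < B) (hBN : IsCoprime B N) :
    ∑ k ∈ Icc 0 (B - 1), k * Esum N χ B k = ∑ x ∈ Icc 1 N, χ x * (B * x / N) := by
  simp only [Esum, mul_sum, sum_filter, mul_ite, mul_zero]
  rw [sum_comm]
  exact sum_congr rfl fun x hx => sum_ite_mul_eq_mul_ediv hN hzero hB hBN hx

theorem sum_mul_mul_emod (hN : 1 < N) (hval : ∀ a, χ a = 0 ∨ χ a = 1 ∨ χ a = -1)
    (hmul : ∀ a b, χ (a * b) = χ a * χ b) (hper : ∀ a b, a ≡ b [ZMOD N] → χ a = χ b)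
    (hzero : ∀ a, χ a = 0 ↔ Int.gcd a N ≠ 1) {B : ℤ} (hBN : IsCoprime B N) :
    ∑ x ∈ Icc 1 N, χ x * (B * x % N) = χ B * ∑ x ∈ Icc 1 N, χ x * x := by
  have hN0 : 0 < N := by omega
  have hχB : χ B * χ B = 1 := by
    have := (hzero B).not.2 (not_not.2 (Int.isCoprime_iff_gcd_eq_one.1 hBN))
    rcases hval B with h | h | h <;> simp_all
  have hχN : χ N = 0 := (hzero N).2 (by rw [Int.gcd_self]; omega)
  have hpt : ∀ x, χ x * (B * x % N) = χ B * (χ (B * x % N) * (B * x % N)) := fun x => by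
    rw [hper _ (B * x) (Int.mod_modEq _ _), hmul]
    linear_combination (-(χ x * (B * x % N))) * hχB
  calc ∑ x ∈ Icc 1 N, χ x * (B * x % N)
      = χ B * ∑ x ∈ Icc 1 N, χ (B * x % N) * (B * x % N) := by
        rw [mul_sum]; exact sum_congr rfl fun x _ => hpt x
    _ = χ B * ∑ x ∈ Ico 0 N, χ (B * x % N) * (B * x % N) := by
        rw [Int.sum_Icc_one_eq_sum_Ico_zero hN0.le (by simp)]
    _ = χ B * ∑ x ∈ Ico 0 N, χ x * x := by
        rw [Int.sum_Ico_comp_mul_emod hN0 hBN (fun y => χ y * y)]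
    _ = χ B * ∑ x ∈ Icc 1 N, χ x * x := by
        rw [Int.sum_Icc_one_eq_sum_Ico_zero hN0.le (by simp [hχN])]

theorem mul_sum_mul_Esum (hN : 1 < N) (hval : ∀ a, χ a = 0 ∨ χ a = 1 ∨ χ a = -1)
    (hmul : ∀ a b, χ (a * b) = χ a * χ b) (hper : ∀ a b, a ≡ b [ZMOD N] → χ a = χ b)
    (hzero : ∀ a, χ a = 0 ↔ Int.gcd a N ≠ 1) {B : ℤ} (hB : 0 < B) (hBN : IsCoprime B N) :
    N * ∑ k ∈ Icc 0 (B - 1), k * Esum N χ B k = (B - χ B) * ∑ x ∈ Icc 1 N, χ x * x := by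
  have hdivmod : ∀ x, N * (χ x * (B * x / N)) = B * (χ x * x) - χ x * (B * x % N) := fun x => by
    linear_combination χ x * Int.mul_ediv_add_emod (B * x) N
  rw [sum_mul_Esum_eq_sum_mul_ediv hN hzero hB hBN, mul_sum, sum_congr rfl fun x _ => hdivmod x,
    sum_sub_distrib, ← mul_sum, sum_mul_mul_emod hN hval hmul hper hzero hBN, sub_mul]

end Character

/-- Theorem 2, first part:
`Σ_{k=0}^{⌊B/2⌋−1} (B − 1 − 2k)·E_k(B) = (B − χ(B))·h`. -/
theorem Esum_class_number_formula (N : ℤ) (hN : 1 < N) (χ : ℤ → ℤ)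
    (hval : ∀ a, χ a = 0 ∨ χ a = 1 ∨ χ a = -1)
    (hmul : ∀ a b, χ (a * b) = χ a * χ b)
    (hper : ∀ a b, a ≡ b [ZMOD N] → χ a = χ b)
    (hzero : ∀ a, χ a = 0 ↔ Int.gcd a N ≠ 1)
    (hodd : χ (-1) = -1)
    (B : ℤ) (hB : 2 ≤ B) (hBN : Int.gcd B N = 1) :
    (((∑ k ∈ Finset.Icc (0 : ℤ) (B / 2 - 1), (B - 1 - 2 * k) * Esum N χ B k) : ℤ) : ℚ) =
      ((B : ℚ) - (χ B : ℚ)) * hcl N χ := by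
  have hBN' : IsCoprime B N := Int.isCoprime_iff_gcd_eq_one.2 hBN
  have hhalf := sum_Icc_half_mul_eq_neg_sum_mul (by omega : 0 ≤ B)
    (Esum_sub_one_sub (by omega) (apply_sub_eq_neg_of_odd hmul hper hodd) B)
  have hint : N * ∑ k ∈ Icc 0 (B / 2 - 1), (B - 1 - 2 * k) * Esum N χ B k =
      (χ B - B) * ∑ x ∈ Icc 1 N, χ x * x := by
    rw [hhalf, mul_neg, mul_sum_mul_Esum hN hval hmul hper hzero (by omega) hBN']
    ring
  generalize ∑ k ∈ Icc 0 (B / 2 - 1), (B - 1 - 2 * k) * Esum N χ B k = S at hint ⊢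
  have hintQ := congrArg (Int.cast : ℤ → ℚ) hint
  push_cast at hintQ
  have hNQ : (N : ℚ) ≠ 0 := by exact_mod_cast (by omega : N ≠ 0)
  rw [hcl]
  field_simp
  linear_combination hintQ
end

section
/- Let m be a squarefree integer with m < −4 and m ≡ 1 (mod 4), N = |m|, and χ(x) = (x/N) the Jacobi symbol. Then Σ_{0 < x < N/2} χ(x) = (2 − χ(2))·h; explicitly, Σ_{0 < x < N/2} χ(x) = h if N ≡ 7 (mod 8), and Σ_{0 < x < N/2} χ(x) = 3h if N ≡ 3 (mod 8). -/
/-- `h = −(1/N)·Σ_{x=1}^{N} χ(x)·x` with `N = |m|` and `χ(x) = (x/N)` the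
Jacobi symbol. -/
noncomputable def hJ (m : ℤ) : ℚ :=
  -(1 / (m.natAbs : ℚ)) *
    ∑ x ∈ Finset.Icc (1 : ℤ) (m.natAbs : ℤ), (jacobiSym x m.natAbs : ℚ) * (x : ℚ)

/-- `Σ_{0 < x < N/2} χ(x)` with `N = |m|`, `χ(x) = (x/N)`; the condition
`0 < x < N/2` is rewritten as `1 ≤ x` and `2x < N`. -/
noncomputable def Shalf (m : ℤ) : ℤ :=
  ∑ x ∈ (Finset.Icc (1 : ℤ) (m.natAbs : ℤ)).filter (fun x => 2 * x < (m.natAbs : ℤ)),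
    jacobiSym x m.natAbs

/-!
Write `S = Σ_{0<x<N} χ(x)·x`, `T = Σ_{0<x<N/2} χ(x)` and `S₁ = Σ_{0<x<N/2} χ(x)·x`, so that
`h = -S/N`. Since `N ≡ 3 (mod 4)`, `χ(-1) = -1`, i.e. `χ(N - x) = -χ(x)`. Reflecting the upper half
of `(0, N)` onto the lower half gives `S = 2S₁ - N·T`. Splitting `(0, N)` by parity instead,
`χ(2y) = χ(2)χ(y)` evaluates the even part, and reflection sends the odd part onto the even part,
so `S = 4χ(2)S₁ - N·χ(2)·T`. Eliminating `S₁` with `χ(2)² = 1` gives `(2 - χ(2))·S = -N·T`.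
-/

open Finset

section Reflection

variable {M : Type*} [AddCommMonoid M]

theorem sum_Ico_one_filter_reflect (n : ℤ) (p : ℤ → Prop) [DecidablePred p] (f : ℤ → M) :
    ∑ x ∈ Ico 1 n with p x, f x = ∑ x ∈ Ico 1 n with p (n - x), f (n - x) :=
  sum_equiv (Equiv.subLeft n) (fun x => by simp; omega) (fun x _ => by simp)

theorem sum_Ico_one_filter_two_dvd (n : ℤ) (f : ℤ → M) :
    ∑ x ∈ Ico 1 n with 2 ∣ x, f x = ∑ y ∈ Ico 1 n with 2 * y < n, f (2 * y) :=
  (sum_nbij' (2 * ·) (· / 2) (fun y => by simp; omega) (fun x => by simp; omega)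
    (fun y _ => by simp) (fun x => by simp; omega) (fun _ _ => rfl)).symm

end Reflection

section OddCharacterSums

variable {R : Type*} [CommRing R] {n : ℤ} {χ : ℤ → R}

theorem sum_Ico_one_mul_eq_of_reflect (hn : Odd n) (hχ : ∀ x, χ (n - x) = -χ x) :
    ∑ x ∈ Ico 1 n, χ x * x =
      2 * ∑ x ∈ Ico 1 n with 2 * x < n, χ x * x - n * ∑ x ∈ Ico 1 n with 2 * x < n, χ x := by
  have hupper : ∑ x ∈ Ico 1 n with ¬2 * x < n, χ x * x =
      ∑ x ∈ Ico 1 n with 2 * x < n, (χ x * x - n * χ x) := by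
    rw [sum_Ico_one_filter_reflect]
    refine sum_congr (filter_congr fun x _ => ?_) fun x _ => ?_
    · rw [Int.odd_iff] at hn; omega
    · push_cast; rw [hχ]; ring
  rw [← sum_filter_add_sum_filter_not _ (fun x => 2 * x < n), hupper, sum_sub_distrib, ← mul_sum]
  ring

theorem sum_Ico_one_mul_eq_of_reflect_of_mul_two (hn : Odd n) (hχ : ∀ x, χ (n - x) = -χ x)
    {c : R} (hχ2 : ∀ y, χ (2 * y) = c * χ y) :
    ∑ x ∈ Ico 1 n, χ x * x =
      4 * c * ∑ x ∈ Ico 1 n with 2 * x < n, χ x * x -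
        n * c * ∑ x ∈ Ico 1 n with 2 * x < n, χ x := by
  have heven_mul : ∑ x ∈ Ico 1 n with 2 ∣ x, χ x * x =
      2 * c * ∑ x ∈ Ico 1 n with 2 * x < n, χ x * x := by
    rw [sum_Ico_one_filter_two_dvd, mul_sum]
    refine sum_congr rfl fun y _ => ?_
    rw [hχ2]; push_cast; ring
  have heven : ∑ x ∈ Ico 1 n with 2 ∣ x, χ x = c * ∑ x ∈ Ico 1 n with 2 * x < n, χ x := by
    rw [sum_Ico_one_filter_two_dvd, mul_sum]
    exact sum_congr rfl fun y _ => hχ2 y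
  have hodd_mul : ∑ x ∈ Ico 1 n with ¬2 ∣ x, χ x * x =
      ∑ x ∈ Ico 1 n with 2 ∣ x, (χ x * x - n * χ x) := by
    rw [sum_Ico_one_filter_reflect]
    refine sum_congr (filter_congr fun x _ => ?_) fun x _ => ?_
    · rw [Int.odd_iff] at hn; omega
    · push_cast; rw [hχ]; ring
  rw [← sum_filter_add_sum_filter_not _ (2 ∣ ·), hodd_mul, sum_sub_distrib, ← mul_sum,
    heven_mul, heven]
  ring

theorem two_sub_mul_sum_Ico_one_mul (hn : Odd n) (hχ : ∀ x, χ (n - x) = -χ x)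
    {c : R} (hχ2 : ∀ y, χ (2 * y) = c * χ y) (hc : c ^ 2 = 1) :
    (2 - c) * ∑ x ∈ Ico 1 n, χ x * x = -n * ∑ x ∈ Ico 1 n with 2 * x < n, χ x := by
  linear_combination (2 * c ^ 2) * sum_Ico_one_mul_eq_of_reflect hn hχ -
    c * sum_Ico_one_mul_eq_of_reflect_of_mul_two hn hχ hχ2 -
    (2 * ∑ x ∈ Ico 1 n, χ x * x + n * ∑ x ∈ Ico 1 n with 2 * x < n, χ x) * hc

end OddCharacterSums

theorem jacobiSym_natCast_sub_left {n : ℕ} (hn : Odd n) (x : ℤ) :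
    jacobiSym (n - x) n = ZMod.χ₄ n * jacobiSym x n := by
  rw [← jacobiSym.neg x hn]
  exact jacobiSym.mod_left' (by simp)

theorem jacobiSym_two_sq {n : ℕ} (hn : Odd n) : jacobiSym 2 n ^ 2 = 1 :=
  jacobiSym.sq_one (by simpa [Int.gcd] using (Nat.coprime_two_left.mpr hn))

theorem Shalf_eq_sum_Ico (m : ℤ) :
    Shalf m = ∑ x ∈ Ico 1 (m.natAbs : ℤ) with 2 * x < (m.natAbs : ℤ), jacobiSym x m.natAbs := by
  rw [Shalf]
  congr 1
  ext x
  simp only [mem_filter, mem_Icc, mem_Ico]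
  omega

theorem hJ_eq_sum_Ico {m : ℤ} (hm : 1 < m.natAbs) :
    hJ m = -(1 / (m.natAbs : ℚ)) *
      ∑ x ∈ Ico 1 (m.natAbs : ℤ), (jacobiSym x m.natAbs : ℚ) * x := by
  have hself : jacobiSym m.natAbs m.natAbs = 0 := by
    rw [jacobiSym.mod_left, Int.emod_self, jacobiSym.zero_left hm]
  rw [hJ, ← Ico_insert_right (by omega), sum_insert (by simp), hself]
  simp

theorem sum_half_eq_general (m : ℤ) (hm : m < -4) (hmod : m % 4 = 1) :
    ((Shalf m : ℤ) : ℚ) = ((2 : ℚ) - (jacobiSym 2 m.natAbs : ℚ)) * hJ m ∧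
      (m.natAbs % 8 = 7 → ((Shalf m : ℤ) : ℚ) = hJ m) ∧
      (m.natAbs % 8 = 3 → ((Shalf m : ℤ) : ℚ) = 3 * hJ m) := by
  set n := m.natAbs with hn
  have hodd : Odd n := Nat.odd_iff.mpr (by omega)
  have hχ₄ : ZMod.χ₄ n = -1 := ZMod.χ₄_nat_three_mod_four (by omega)
  have key := two_sub_mul_sum_Ico_one_mul (χ := fun x => (jacobiSym x n : ℚ))
    (c := (jacobiSym 2 n : ℚ)) ((Int.odd_coe_nat n).mpr hodd)
    (fun x => by simp [jacobiSym_natCast_sub_left hodd, hχ₄])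
    (fun y => by simp [jacobiSym.mul_left]) (mod_cast jacobiSym_two_sq hodd)
  have hmain : ((Shalf m : ℤ) : ℚ) = ((2 : ℚ) - (jacobiSym 2 n : ℚ)) * hJ m := by
    rw [Shalf_eq_sum_Ico, hJ_eq_sum_Ico (by omega), ← hn, Int.cast_sum]
    rw [Int.cast_natCast] at key
    have hn0 : (n : ℚ) ≠ 0 := Nat.cast_ne_zero.mpr (by omega)
    field_simp
    linear_combination key
  refine ⟨hmain, fun h8 => ?_, fun h8 => ?_⟩
  · have hχ₂ : jacobiSym 2 n = 1 := by
      rw [jacobiSym.at_two hodd, ZMod.χ₈_nat_mod_eight, h8]; rfl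
    rw [hmain, hχ₂]; norm_num
  · have hχ₂ : jacobiSym 2 n = -1 := by
      rw [jacobiSym.at_two hodd, ZMod.χ₈_nat_mod_eight, h8]; rfl
    rw [hmain, hχ₂]; norm_num

/-- for squarefree `m < −4` with `m ≡ 1 (mod 4)` and `N = |m|`,
`Σ_{0<x<N/2} χ(x) = (2 − χ(2))·h`; explicitly it equals `h` if `N ≡ 7 (mod 8)`
and `3h` if `N ≡ 3 (mod 8)`. -/
theorem sum_half_eq (m : ℤ) (hm : m < -4) (hsf : Squarefree m) (hmod : m % 4 = 1) :
    ((Shalf m : ℤ) : ℚ) = ((2 : ℚ) - (jacobiSym 2 m.natAbs : ℚ)) * hJ m ∧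
      (m.natAbs % 8 = 7 → ((Shalf m : ℤ) : ℚ) = hJ m) ∧
      (m.natAbs % 8 = 3 → ((Shalf m : ℤ) : ℚ) = 3 * hJ m) :=
  sum_half_eq_general m hm hmod
end

section
/- Let m be a squarefree integer with m < −4, m ≡ 1 (mod 4) and m not divisible by 3, N = |m|, and χ(x) = (x/N) the Jacobi symbol. Set E_k(6) := Σ χ(x) over integers x with kN/6 < x < (k+1)N/6, for k = 0, 1, 2. Then: if N ≡ 23 (mod 24), then E₀(6) = h, E₁(6) = 0, E₂(6) = 0; if N ≡ 11 (mod 24), then E₀(6) = h, E₁(6) = 0, E₂(6) = 2h; if N ≡ 7 (mod 24), then E₀(6) = h, E₁(6) = h, E₂(6) = −h; if N ≡ 19 (mod 24), then E₀(6) = −h, E₁(6) = 3h, E₂(6) = h. -/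
/-- `E_k(B) = Σ χ(x)` over integers `x` with `kN/B < x < (k+1)N/B`, where
`N = |m|` and `χ(x) = (x/N)` is the Jacobi symbol (the inequalities are
rewritten as `kN < Bx` and `Bx < (k+1)N`). -/
noncomputable def EJ (m : ℤ) (B k : ℤ) : ℤ :=
  ∑ x ∈ (Finset.Icc (1 : ℤ) (m.natAbs : ℤ)).filter
      (fun x => k * (m.natAbs : ℤ) < B * x ∧ B * x < (k + 1) * (m.natAbs : ℤ)),
    jacobiSym x m.natAbs

/-!
For `c` prime to `N`, the substitution `x ↦ c x mod N` permutes the residues and multiplies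
`χ` by `χ(c)`; with the weight `x ↦ x mod N` this gives
`N · Σ χ(x) ⌊c x / N⌋ = (c - χ(c)) · Σ χ(x) x`. Grouping the `x` according to `⌊B x / N⌋`, the
left side for `c = B` is `N · Σ_k k E_k(B)`. As `χ` is odd, `E_{B-1-k}(B) = -E_k(B)` and
`Σ_k E_k(B) = 0`, and when `3 ∤ N` the sums `E_0(2)`, `E_0(3)` split into sums over sixths.
For `B = 2, 3, 6` this gives three independent linear relations determining
`E_0(6), E_1(6), E_2(6)` in terms of `χ(2)`, `χ(3)` and `h`, and `N mod 24` fixes `χ(2)`, `χ(3)`.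
-/

open Finset Function
open scoped NumberTheorySymbols

theorem Int.mul_emod_mul_emod_eq {n c d a : ℤ} (hdc : d * c ≡ 1 [ZMOD n]) (ha₀ : 0 ≤ a)
    (han : a < n) : d * (c * a % n) % n = a := by
  have h : d * (c * a % n) ≡ a [ZMOD n] :=
    calc d * (c * a % n) ≡ d * (c * a) [ZMOD n] := (Int.mod_modEq _ _).mul_left d
      _ = d * c * a := by ring
      _ ≡ 1 * a [ZMOD n] := hdc.mul_right a
      _ = a := one_mul a
  rw [h, Int.emod_eq_of_lt ha₀ han]

theorem Int.mul_lt_and_lt_mul_iff_ediv_eq {n y k : ℤ} (hn : 0 < n) (hy : ¬ n ∣ y) :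
    k * n < y ∧ y < (k + 1) * n ↔ y / n = k := by
  constructor
  · rintro ⟨h₁, h₂⟩
    exact le_antisymm (Int.lt_add_one_iff.1 ((Int.ediv_lt_iff_lt_mul hn).2 h₂))
      ((Int.le_ediv_iff_mul_le hn).2 h₁.le)
  · rintro rfl
    exact ⟨(Int.ediv_mul_le y hn.ne').lt_of_ne fun h => hy ⟨y / n, by rw [mul_comm, h]⟩,
      Int.lt_ediv_add_one_mul_self y hn⟩

theorem Function.Periodic.sum_Ico_comp_mul {M : Type*} [AddCommMonoid M] {g : ℤ → M} {n c : ℤ}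
    (hg : Periodic g n) (hc : IsCoprime c n) :
    ∑ x ∈ Ico 0 n, g (c * x) = ∑ x ∈ Ico 0 n, g x := by
  obtain ⟨d, e, hde⟩ := hc
  have hdc : d * c ≡ 1 [ZMOD n] := (Int.modEq_iff_add_fac).2 ⟨e, by linear_combination -hde⟩
  have hcd : c * d ≡ 1 [ZMOD n] := by rwa [mul_comm]
  have hmem (a b : ℤ) (ha : a ∈ Ico 0 n) : b * a % n ∈ Ico 0 n := by
    have hn : 0 < n := (mem_Ico.1 ha).1.trans_lt (mem_Ico.1 ha).2
    exact mem_Ico.2 ⟨Int.emod_nonneg _ hn.ne', Int.emod_lt_of_pos _ hn⟩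
  calc ∑ x ∈ Ico 0 n, g (c * x) = ∑ x ∈ Ico 0 n, g (c * x % n) := by
        refine sum_congr rfl fun x _ => ?_
        rw [Int.emod_def, mul_comm n, ← smul_eq_mul (c * x / n), hg.sub_zsmul_eq]
    _ = ∑ x ∈ Ico 0 n, g x :=
        sum_nbij' (fun x => c * x % n) (fun y => d * y % n) (fun a ha => hmem a c ha)
          (fun a ha => hmem a d ha)
          (fun a ha => Int.mul_emod_mul_emod_eq hdc (mem_Ico.1 ha).1 (mem_Ico.1 ha).2)
          (fun a ha => Int.mul_emod_mul_emod_eq hcd (mem_Ico.1 ha).1 (mem_Ico.1 ha).2)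
          fun _ _ => rfl

theorem Function.Periodic.sum_Icc_one_eq_sum_Ico_zero_s12 {M : Type*} [AddCommMonoid M] {g : ℤ → M}
    {n : ℤ} (hg : Periodic g n) : ∑ x ∈ Icc 1 n, g x = ∑ x ∈ Ico 0 n, g x := by
  rcases le_or_gt n 0 with hn | hn
  · rw [Icc_eq_empty (by omega), Ico_eq_empty (by omega)]
  have hIcc : Icc 1 n = Ioc 0 n := by ext; simp only [mem_Icc, mem_Ioc]; omega
  rw [hIcc, ← Ioo_insert_left hn, ← Ioo_insert_right hn, sum_insert right_notMem_Ioo,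
    sum_insert left_notMem_Ioo, hg.eq]

theorem Function.Periodic.sum_Icc_comp_mul {M : Type*} [AddCommMonoid M] {g : ℤ → M} {n c : ℤ}
    (hg : Periodic g n) (hc : IsCoprime c n) :
    ∑ x ∈ Icc 1 n, g (c * x) = ∑ x ∈ Icc 1 n, g x := by
  have hgc : Periodic (fun x => g (c * x)) n := fun x => by
    simpa only [mul_add, smul_eq_mul] using hg.zsmul c (c * x)
  rw [hgc.sum_Icc_one_eq_sum_Ico_zero_s12, hg.sum_Icc_one_eq_sum_Ico_zero_s12, hg.sum_Ico_comp_mul hc]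

section JacobiSums

variable {N : ℕ}

theorem jacobiSym_periodic (N : ℕ) : Periodic (fun x : ℤ => J(x | N)) N :=
  fun _ => jacobiSym.mod_left' (Int.add_emod_right _ _)

theorem jacobiSym_natCast_self (hN : 1 < N) : J(N | N) = 0 := by
  rw [jacobiSym.mod_left, Int.emod_self, jacobiSym.zero_left hN]

theorem jacobiSym_neg_one_of_mod_four_eq_three (hN : N % 4 = 3) : J(-1 | N) = -1 := by
  rw [jacobiSym.at_neg_one (Nat.odd_iff.2 (by omega)), ZMod.χ₄_nat_three_mod_four hN]

theorem jacobiSym_natCast_sub (hodd : J(-1 | N) = -1) (x : ℤ) : J(N - x | N) = -J(x | N) := by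
  have hmod : ((N : ℤ) - x) % N = -1 * x % N := by
    rw [sub_eq_neg_add, ← neg_one_mul, Int.add_emod_right]
  rw [jacobiSym.mod_left' hmod, jacobiSym.mul_left, hodd, neg_one_mul]

theorem sum_jacobiSym_mul_comp_mul {c : ℤ} (hc : IsCoprime c N) {w : ℤ → ℤ}
    (hw : Periodic w N) :
    ∑ x ∈ Icc 1 (N : ℤ), J(x | N) * w (c * x) =
      J(c | N) * ∑ x ∈ Icc 1 (N : ℤ), J(x | N) * w x := by
  have hg : Periodic (fun x : ℤ => J(x | N) * w x) N := (jacobiSym_periodic N).mul hw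
  have hsq : J(c | N) * J(c | N) = 1 := by
    rw [← sq, jacobiSym.sq_one (Int.isCoprime_iff_gcd_eq_one.1 hc)]
  calc ∑ x ∈ Icc 1 (N : ℤ), J(x | N) * w (c * x)
      = J(c | N) * ∑ x ∈ Icc 1 (N : ℤ), J(c * x | N) * w (c * x) := by
        rw [mul_sum]
        refine sum_congr rfl fun x _ => ?_
        rw [jacobiSym.mul_left]
        linear_combination (-(J(x | N) * w (c * x))) * hsq
    _ = J(c | N) * ∑ x ∈ Icc 1 (N : ℤ), J(x | N) * w x := by
        rw [hg.sum_Icc_comp_mul hc]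

theorem sum_jacobiSym_eq_zero (hodd : J(-1 | N) = -1) : ∑ x ∈ Icc 1 (N : ℤ), J(x | N) = 0 := by
  have h := sum_jacobiSym_mul_comp_mul (N := N) isCoprime_one_left.neg_left (w := fun _ => 1)
    fun _ => rfl
  simp only [mul_one, hodd] at h
  linarith

noncomputable def firstMoment (N : ℕ) : ℤ := ∑ x ∈ Icc 1 (N : ℤ), J(x | N) * x

theorem sum_jacobiSym_mul_emod (hN : 1 < N) :
    ∑ x ∈ Icc 1 (N : ℤ), J(x | N) * (x % N) = firstMoment N := by
  refine sum_congr rfl fun x hx => ?_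
  obtain ⟨hx₁, hxN⟩ := mem_Icc.1 hx
  rcases hxN.lt_or_eq with hxN | rfl
  · rw [Int.emod_eq_of_lt (by omega) hxN]
  · rw [jacobiSym_natCast_self hN, zero_mul, zero_mul]

theorem natCast_mul_sum_jacobiSym_mul_ediv (hN : 1 < N) {c : ℤ} (hc : IsCoprime c N) :
    N * ∑ x ∈ Icc 1 (N : ℤ), J(x | N) * (c * x / N) = (c - J(c | N)) * firstMoment N := by
  have h := sum_jacobiSym_mul_comp_mul hc (w := fun y => y % N) fun _ => Int.add_emod_right _ _
  have hsplit (x : ℤ) :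
      J(x | N) * (c * x % N) = c * (J(x | N) * x) - N * (J(x | N) * (c * x / N)) := by
    rw [Int.emod_def]; ring
  simp only [hsplit, sum_sub_distrib, ← mul_sum, sum_jacobiSym_mul_emod hN] at h
  rw [← firstMoment] at h
  linear_combination -h

noncomputable def partialInterval (N : ℕ) (B k : ℤ) : Finset ℤ :=
  (Icc 1 (N : ℤ)).filter fun x => k * N < B * x ∧ B * x < (k + 1) * N

noncomputable def partialSum (N : ℕ) (B k : ℤ) : ℤ := ∑ x ∈ partialInterval N B k, J(x | N)

theorem sum_jacobiSym_mul_comp_ediv (hN : 1 < N) {B : ℕ} (hB : IsCoprime (B : ℤ) N)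
    (f : ℤ → ℤ) :
    ∑ x ∈ Icc 1 (N : ℤ), J(x | N) * f (B * x / N) = ∑ k ∈ range B, partialSum N B k * f k := by
  simp only [partialSum, partialInterval, sum_filter, sum_mul, ite_mul, zero_mul]
  rw [sum_comm]
  refine sum_congr rfl fun x hx => ?_
  obtain ⟨hx₁, hxN⟩ := mem_Icc.1 hx
  rcases hxN.lt_or_eq with hxN | rfl
  · have hN₀ : (0 : ℤ) < N := by omega
    have hndvd : ¬ (N : ℤ) ∣ B * x := fun h => by
      have := Int.le_of_dvd (by omega) (hB.symm.dvd_of_dvd_mul_left h)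
      omega
    have hB₀ : (0 : ℤ) < B := by
      rcases B.eq_zero_or_pos with rfl | hB₀
      · simp at hndvd
      · exact_mod_cast hB₀
    obtain ⟨q, hq⟩ : ∃ q : ℕ, B * x / N = q :=
      Int.eq_ofNat_of_zero_le (Int.ediv_nonneg (by positivity) hN₀.le)
    have hqB : q < B := by
      have : B * x / N < B := (Int.ediv_lt_iff_lt_mul hN₀).2 (by nlinarith)
      omega
    simp only [Int.mul_lt_and_lt_mul_iff_ediv_eq hN₀ hndvd, hq, Nat.cast_inj, sum_ite_eq,
      mem_range, hqB, if_true]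
  · simp [jacobiSym_natCast_self hN]

theorem natCast_sub_mem_partialInterval {B j k x : ℤ} (hj : 0 ≤ j) (hk : 0 ≤ k)
    (hjk : j + k + 1 = B) (hx : x ∈ partialInterval N B k) :
    (N : ℤ) - x ∈ partialInterval N B j := by
  simp only [partialInterval, mem_filter, mem_Icc] at hx ⊢
  obtain ⟨⟨hx₁, -⟩, h₁, h₂⟩ := hx
  subst hjk
  have hxN : x < N := by nlinarith
  refine ⟨⟨by omega, by omega⟩, by linarith, by linarith⟩

theorem partialSum_eq_neg (hodd : J(-1 | N) = -1) {B j k : ℤ} (hj : 0 ≤ j) (hk : 0 ≤ k)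
    (hjk : j + k + 1 = B) : partialSum N B j = -partialSum N B k := by
  rw [partialSum, partialSum, ← sum_neg_distrib]
  exact sum_nbij' (fun x => N - x) (fun x => N - x)
    (fun x hx => natCast_sub_mem_partialInterval hk hj (by omega) hx)
    (fun x hx => natCast_sub_mem_partialInterval hj hk hjk hx)
    (fun x _ => sub_sub_cancel _ _) (fun x _ => sub_sub_cancel _ _)
    fun x _ => by rw [jacobiSym_natCast_sub hodd, neg_neg]

theorem partialSum_two_zero (h3 : ¬ 3 ∣ N) :
    partialSum N 2 0 = partialSum N 6 0 + partialSum N 6 1 + partialSum N 6 2 := by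
  simp only [partialSum, partialInterval, sum_filter, ← sum_add_distrib]
  refine sum_congr rfl fun x _ => ?_
  split_ifs <;> first | ring1 | (exfalso; omega)

theorem partialSum_three_zero (h3 : ¬ 3 ∣ N) :
    partialSum N 3 0 = partialSum N 6 0 + partialSum N 6 1 := by
  simp only [partialSum, partialInterval, sum_filter, ← sum_add_distrib]
  refine sum_congr rfl fun x _ => ?_
  split_ifs <;> first | ring1 | (exfalso; omega)

theorem natCast_mul_sum_partialSum_mul (hN : 1 < N) {B : ℕ} (hB : IsCoprime (B : ℤ) N) :
    N * ∑ k ∈ range B, partialSum N B k * k = (B - J(B | N)) * firstMoment N := by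
  have h := sum_jacobiSym_mul_comp_ediv hN hB id
  simp only [id] at h
  rw [← h, natCast_mul_sum_jacobiSym_mul_ediv hN hB]

theorem sum_partialSum_eq_zero (hN : 1 < N) (hodd : J(-1 | N) = -1) {B : ℕ}
    (hB : IsCoprime (B : ℤ) N) : ∑ k ∈ range B, partialSum N B k = 0 := by
  have h := sum_jacobiSym_mul_comp_ediv hN hB fun _ => 1
  simp only [mul_one] at h
  rw [← h, sum_jacobiSym_eq_zero hodd]

theorem two_mul_natCast_mul_partialSum_six (hN4 : N % 4 = 3) (h3 : ¬ 3 ∣ N) :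
    2 * (N * partialSum N 6 0) =
      (J(2 | N) * J(3 | N) - J(2 | N) - J(3 | N) - 1) * firstMoment N ∧
    2 * (N * partialSum N 6 1) =
      (J(2 | N) + 2 * J(3 | N) - J(2 | N) * J(3 | N) - 2) * firstMoment N ∧
    2 * (N * partialSum N 6 2) = (2 * J(2 | N) - J(3 | N) - 1) * firstMoment N := by
  have hN : 1 < N := by omega
  have hodd := jacobiSym_neg_one_of_mod_four_eq_three hN4
  have hc2 : IsCoprime (2 : ℤ) N := Int.prime_two.coprime_iff_not_dvd.2 (by omega)
  have hc3 : IsCoprime (3 : ℤ) N := Int.prime_three.coprime_iff_not_dvd.2 (by omega)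
  have K2 := natCast_mul_sum_partialSum_mul hN (B := 2) hc2
  have K3 := natCast_mul_sum_partialSum_mul hN (B := 3) hc3
  have K6 := natCast_mul_sum_partialSum_mul hN (B := 6) (by simpa using hc2.mul_left hc3)
  have Z3 := sum_partialSum_eq_zero hN hodd (B := 3) hc3
  simp only [sum_range_succ, sum_range_zero, Nat.cast_ofNat, Nat.cast_zero, Nat.cast_one,
    mul_zero, mul_one, zero_add] at K2 K3 K6 Z3
  have h6 : J(6 | N) = J(2 | N) * J(3 | N) := by rw [← jacobiSym.mul_left]; norm_num
  have reflect (B j k : ℤ) (hj : 0 ≤ j := by norm_num) (hk : 0 ≤ k := by norm_num)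
      (hjk : j + k + 1 = B := by norm_num) :=
    partialSum_eq_neg hodd hj hk hjk
  rw [reflect 2 1 0, partialSum_two_zero h3] at K2
  rw [reflect 3 2 0, partialSum_three_zero h3] at K3 Z3
  rw [reflect 6 3 2, reflect 6 4 1, reflect 6 5 0, h6] at K6
  exact ⟨by linear_combination K2 + K3 - N * Z3 - K6,
    by linear_combination -2 * (K3 - N * Z3) - K2 + K6,
    by linear_combination -2 * K2 + K3 - N * Z3⟩

end JacobiSums

theorem hJ_eq_neg_firstMoment_div (m : ℤ) : hJ m = -(firstMoment m.natAbs : ℚ) / m.natAbs := by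
  unfold hJ firstMoment
  push_cast
  ring

theorem intCast_eq_mul_hJ {m e d : ℤ} (hm : m ≠ 0)
    (h : 2 * (m.natAbs * e) = d * firstMoment m.natAbs) : (e : ℚ) = -d / 2 * hJ m := by
  have hN : (m.natAbs : ℚ) ≠ 0 := by simpa using hm
  have hq := congrArg (Int.cast : ℤ → ℚ) h
  simp only [Int.cast_mul, Int.cast_ofNat, Int.cast_natCast] at hq
  rw [hJ_eq_neg_firstMoment_div]
  field_simp
  linear_combination hq

theorem sixths_distribution_general (m : ℤ) (hm : m < -4)
    (hmod : m % 4 = 1) (h3 : ¬ (3 ∣ m)) :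
    (m.natAbs % 24 = 23 →
        ((EJ m 6 0 : ℤ) : ℚ) = hJ m ∧ EJ m 6 1 = 0 ∧ EJ m 6 2 = 0) ∧
      (m.natAbs % 24 = 11 →
        ((EJ m 6 0 : ℤ) : ℚ) = hJ m ∧ EJ m 6 1 = 0 ∧ ((EJ m 6 2 : ℤ) : ℚ) = 2 * hJ m) ∧
      (m.natAbs % 24 = 7 →
        ((EJ m 6 0 : ℤ) : ℚ) = hJ m ∧ ((EJ m 6 1 : ℤ) : ℚ) = hJ m ∧
          ((EJ m 6 2 : ℤ) : ℚ) = -hJ m) ∧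
      (m.natAbs % 24 = 19 →
        ((EJ m 6 0 : ℤ) : ℚ) = -hJ m ∧ ((EJ m 6 1 : ℤ) : ℚ) = 3 * hJ m ∧
          ((EJ m 6 2 : ℤ) : ℚ) = hJ m) := by
  have hodd : Odd m.natAbs := Nat.odd_iff.2 (by omega)
  obtain ⟨h0, h1, h2⟩ := two_mul_natCast_mul_partialSum_six (N := m.natAbs) (by omega) (by omega)
  replace h0 := intCast_eq_mul_hJ (by omega) h0
  replace h1 := intCast_eq_mul_hJ (by omega) h1
  replace h2 := intCast_eq_mul_hJ (by omega) h2
  have hχ2 : J(2 | m.natAbs) = J(2 | m.natAbs % 24 % 8) := by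
    rw [Nat.mod_mod_of_dvd _ (by norm_num)]; exact jacobiSym.mod_right 2 hodd
  have hχ3 : J(3 | m.natAbs) = J(3 | m.natAbs % 24 % 12) := by
    rw [Nat.mod_mod_of_dvd _ (by norm_num)]; exact jacobiSym.mod_right 3 hodd
  refine ⟨fun h24 => ?_, fun h24 => ?_, fun h24 => ?_, fun h24 => ?_⟩ <;>
  · rw [h24] at hχ2 hχ3
    norm_num [hχ2, hχ3] at h0 h1 h2
    exact ⟨h0, h1, h2⟩

/-- Theorem 4.2: for squarefree `m < −4`, `m ≡ 1 (mod 4)`,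
`3 ∤ m`, `N = |m|`, the values of `E₀(6), E₁(6), E₂(6)` according to
`N mod 24`. -/
theorem sixths_distribution (m : ℤ) (hm : m < -4) (hsf : Squarefree m)
    (hmod : m % 4 = 1) (h3 : ¬ (3 ∣ m)) :
    (m.natAbs % 24 = 23 →
        ((EJ m 6 0 : ℤ) : ℚ) = hJ m ∧ EJ m 6 1 = 0 ∧ EJ m 6 2 = 0) ∧
      (m.natAbs % 24 = 11 →
        ((EJ m 6 0 : ℤ) : ℚ) = hJ m ∧ EJ m 6 1 = 0 ∧ ((EJ m 6 2 : ℤ) : ℚ) = 2 * hJ m) ∧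
      (m.natAbs % 24 = 7 →
        ((EJ m 6 0 : ℤ) : ℚ) = hJ m ∧ ((EJ m 6 1 : ℤ) : ℚ) = hJ m ∧
          ((EJ m 6 2 : ℤ) : ℚ) = -hJ m) ∧
      (m.natAbs % 24 = 19 →
        ((EJ m 6 0 : ℤ) : ℚ) = -hJ m ∧ ((EJ m 6 1 : ℤ) : ℚ) = 3 * hJ m ∧
          ((EJ m 6 2 : ℤ) : ℚ) = hJ m) :=
  sixths_distribution_general m hm hmod h3
end
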